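/- arXiv:1404.0920 — 2 statements merged into one kernel-verified Lean document; each statement's English description precedes it below -/
import Mathlib

section
/- Suppose f₁, f₂ : ℝⁿ → [0,∞) satisfy fⱼ(λ) = Kⱼ(λ)/|λ|^{n−κⱼ} with κⱼ > 0, where K₁, K₂ are nonnegative bounded continuous functions on ℝⁿ \ {0} and f₁, f₂ ∈ L¹(ℝⁿ). If κ₁ + κ₂ < n, then there is a bounded function B, continuous on ℝⁿ \ {0}, such that the convolution g(λ) = ∫_{ℝⁿ} f₁(λ−η) f₂(η) dη satisfies g(λ) = B(λ)|λ|^{κ₁+κ₂−n} for all λ ≠ 0; equivalently, sup_{λ≠0} g(λ)|λ|^{n−κ₁−κ₂} < ∞. -/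
/-!
With `a = κ₁ - n` and `b = κ₂ - n` we have `|f₁ y| ≤ C₁ ‖y‖^a` and `|f₂ z| ≤ C₂ ‖z‖^b`. If
`y + z = λ`, the longer of `y`, `z` has norm at least `max (‖λ‖/2) (norm of the shorter one)`, so
`‖y‖^a ‖z‖^b ≤ Φ_{a,b}(y) + Φ_{b,a}(z)` with `Φ_{a,b}(y) = ‖y‖^a (max (‖λ‖/2) ‖y‖)^b`
(`rpowMajorant`). In polar coordinates `Φ_{a,b}` is integrable because `a > -n` (at the origin)
and `a + b < -n` (at infinity), and dilating by `‖λ‖/2` gives `∫ Φ_{a,b} = c ‖λ‖^(n + a + b)`.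

Continuity away from the origin: split `f₁ = χ f₁ + (1 - χ) f₁` with a bump `χ` at `0`. Then
`(1 - χ) f₁` is bounded and continuous, and for `λ` near a fixed `λ₀ ≠ 0` the factor `χ f₁ (η)`
only meets `f₂ (λ - η)` where `f₂ = (1 - χ) f₂` is bounded and continuous; the convolution of an
integrable function with a bounded continuous one is continuous.
-/

open Real MeasureTheory Metric Set Filter Module ContinuousLinearMap
open scoped Convolution Topology

section Majorant

variable {E : Type*} [NormedAddCommGroup E]

noncomputable def rpowMajorant (a b r : ℝ) (y : E) : ℝ := ‖y‖ ^ a * max r ‖y‖ ^ b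

lemma rpowMajorant_nonneg (a b : ℝ) {r : ℝ} (hr : 0 ≤ r) (y : E) : 0 ≤ rpowMajorant a b r y :=
  mul_nonneg (rpow_nonneg (norm_nonneg y) a) (rpow_nonneg (hr.trans (le_max_left _ _)) b)

lemma rpow_norm_mul_rpow_norm_le_rpowMajorant (a : ℝ) {b : ℝ} (hb : b ≤ 0) {y z : E}
    (hy : y ≠ 0) (hyz : ‖y‖ ≤ ‖z‖) :
    ‖y‖ ^ a * ‖z‖ ^ b ≤ rpowMajorant a b (‖y + z‖ / 2) y := by
  have hmax : max (‖y + z‖ / 2) ‖y‖ ≤ ‖z‖ := by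
    refine max_le ?_ hyz
    linarith [norm_add_le y z]
  have hpos : 0 < max (‖y + z‖ / 2) ‖y‖ := (norm_pos_iff.2 hy).trans_le (le_max_right _ _)
  exact mul_le_mul_of_nonneg_left (rpow_le_rpow_of_nonpos hpos hmax hb)
    (rpow_nonneg (norm_nonneg y) a)

lemma rpow_norm_mul_rpow_norm_le {a b : ℝ} (ha : a ≤ 0) (hb : b ≤ 0) {y z : E}
    (hy : y ≠ 0) (hz : z ≠ 0) :
    ‖y‖ ^ a * ‖z‖ ^ b ≤
      rpowMajorant a b (‖y + z‖ / 2) y + rpowMajorant b a (‖y + z‖ / 2) z := by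
  have h₀ : 0 ≤ ‖y + z‖ / 2 := by positivity
  rcases le_total ‖y‖ ‖z‖ with hyz | hzy
  · exact (rpow_norm_mul_rpow_norm_le_rpowMajorant a hb hy hyz).trans
      (le_add_of_nonneg_right (rpowMajorant_nonneg b a h₀ z))
  · have h := rpow_norm_mul_rpow_norm_le_rpowMajorant b ha hz hzy
    rw [add_comm z y, mul_comm] at h
    exact h.trans (le_add_of_nonneg_left (rpowMajorant_nonneg a b h₀ y))

variable [NormedSpace ℝ E]

lemma rpowMajorant_smul {a b r : ℝ} (hr : 0 < r) (y : E) :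
    rpowMajorant a b r (r • y) = r ^ (a + b) * rpowMajorant a b 1 y := by
  have hmax : max r (r * ‖y‖) = r * max 1 ‖y‖ := by rw [mul_max_of_nonneg _ _ hr.le, mul_one]
  simp only [rpowMajorant, norm_smul, norm_of_nonneg hr.le, hmax,
    mul_rpow hr.le (norm_nonneg y), mul_rpow hr.le (zero_le_one.trans (le_max_left 1 ‖y‖)),
    rpow_add hr]
  ring

variable [FiniteDimensional ℝ E] [MeasurableSpace E] [BorelSpace E]
  (μ : Measure E) [μ.IsAddHaarMeasure]

lemma integral_rpowMajorant {a b r : ℝ} (hr : 0 < r) :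
    ∫ y, rpowMajorant a b r y ∂μ = r ^ (finrank ℝ E + a + b) * ∫ y, rpowMajorant a b 1 y ∂μ := by
  have h := μ.integral_comp_smul (rpowMajorant a b r) r
  simp only [rpowMajorant_smul hr, integral_const_mul, smul_eq_mul,
    abs_of_pos (inv_pos.2 (pow_pos hr _))] at h
  rw [add_assoc, rpow_add hr, rpow_natCast, mul_assoc, h, mul_inv_cancel_left₀ (by positivity)]

lemma integrable_rpowMajorant [Nontrivial E] {a b r : ℝ} (ha : -(finrank ℝ E : ℝ) < a)
    (hab : a + b < -(finrank ℝ E : ℝ)) (hr : 0 < r) : Integrable (rpowMajorant a b r) μ := by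
  have hd : 1 ≤ finrank ℝ E := finrank_pos
  have hpow : ∀ y : ℝ, y ^ (finrank ℝ E - 1) = y ^ ((finrank ℝ E : ℝ) - 1) := by
    intro y
    rw [← rpow_natCast, Nat.cast_sub hd, Nat.cast_one]
  refine (integrable_fun_norm_addHaar μ (f := fun s => s ^ a * max r s ^ b)).2 ?_
  rw [← Ioc_union_Ioi_eq_Ioi hr.le]
  refine IntegrableOn.union ?_ ?_
  · have h := ((intervalIntegrable_iff_integrableOn_Ioc_of_le hr.le).1
      (intervalIntegral.intervalIntegrable_rpow' (r := (finrank ℝ E : ℝ) - 1 + a)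
        (by linarith))).const_mul (r ^ b)
    refine IntegrableOn.congr_fun h (fun y ⟨hy, hyr⟩ => ?_) measurableSet_Ioc
    simp only [smul_eq_mul, max_eq_left hyr, hpow y, rpow_add hy]
    ring
  · refine (integrableOn_Ioi_rpow_of_lt (a := (finrank ℝ E : ℝ) - 1 + a + b) (by linarith) hr
      ).congr_fun (fun y (hy : r < y) => ?_) measurableSet_Ioi
    have hy0 : 0 < y := hr.trans hy
    simp only [smul_eq_mul, max_eq_right hy.le, hpow y, rpow_add hy0, mul_assoc]

end Majorant

section ConvolutionBound

variable {E : Type*} [NormedAddCommGroup E] [NormedSpace ℝ E] [FiniteDimensional ℝ E]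
  [MeasurableSpace E] [BorelSpace E] {μ : Measure E} [μ.IsAddHaarMeasure]
  {f₁ f₂ : E → ℝ} {a b C₁ C₂ : ℝ}

lemma norm_smul_le_rpowMajorant_ae [Nontrivial E] (ha : a ≤ 0) (hb : b ≤ 0) (hC₁ : 0 ≤ C₁)
    (hC₂ : 0 ≤ C₂) (hf₁ : ∀ z ≠ 0, ‖f₁ z‖ ≤ C₁ * ‖z‖ ^ a) (hf₂ : ∀ z ≠ 0, ‖f₂ z‖ ≤ C₂ * ‖z‖ ^ b)
    (x : E) :
    ∀ᵐ t ∂μ, ‖f₁ t • f₂ (x - t)‖ ≤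
      C₁ * C₂ * (rpowMajorant a b (‖x‖ / 2) t + rpowMajorant b a (‖x‖ / 2) (x - t)) := by
  filter_upwards [(countable_singleton 0).ae_notMem μ, (countable_singleton x).ae_notMem μ]
    with t ht hxt
  have ht : t ≠ 0 := ht
  have hxt : x - t ≠ 0 := sub_ne_zero.2 (Ne.symm hxt)
  have hsum := rpow_norm_mul_rpow_norm_le ha hb ht hxt
  rw [add_sub_cancel] at hsum
  calc ‖f₁ t • f₂ (x - t)‖ = ‖f₁ t‖ * ‖f₂ (x - t)‖ := norm_smul _ _
    _ ≤ C₁ * ‖t‖ ^ a * (C₂ * ‖x - t‖ ^ b) :=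
      mul_le_mul (hf₁ t ht) (hf₂ _ hxt) (norm_nonneg _) (by positivity)
    _ = C₁ * C₂ * (‖t‖ ^ a * ‖x - t‖ ^ b) := by ring
    _ ≤ _ := by gcongr

theorem norm_convolution_le_rpow (ha : -(finrank ℝ E : ℝ) < a) (hb : -(finrank ℝ E : ℝ) < b)
    (hab : a + b < -(finrank ℝ E : ℝ)) (hC₁ : 0 ≤ C₁) (hC₂ : 0 ≤ C₂)
    (hf₁ : ∀ z ≠ 0, ‖f₁ z‖ ≤ C₁ * ‖z‖ ^ a) (hf₂ : ∀ z ≠ 0, ‖f₂ z‖ ≤ C₂ * ‖z‖ ^ b) :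
    ∃ M, ∀ x ≠ 0, ‖(f₁ ⋆[lsmul ℝ ℝ, μ] f₂) x‖ ≤ M * ‖x‖ ^ (finrank ℝ E + a + b) := by
  have : Nontrivial E := Module.nontrivial_of_finrank_pos (R := ℝ)
    (by exact_mod_cast (by linarith : (0 : ℝ) < finrank ℝ E))
  set d : ℝ := (finrank ℝ E : ℝ)
  let c := ∫ y, rpowMajorant a b 1 y ∂μ + ∫ y, rpowMajorant b a 1 y ∂μ
  refine ⟨C₁ * C₂ * c * 2 ^ (-(d + a + b)), fun x hx => ?_⟩
  have hr : 0 < ‖x‖ / 2 := by have := norm_pos_iff.2 hx; positivity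
  have hint₁ := integrable_rpowMajorant μ ha hab hr
  have hint₂ := (integrable_rpowMajorant μ (b := a) hb (by linarith) hr).comp_sub_left x
  calc ‖(f₁ ⋆[lsmul ℝ ℝ, μ] f₂) x‖
      ≤ ∫ t, C₁ * C₂ * (rpowMajorant a b (‖x‖ / 2) t + rpowMajorant b a (‖x‖ / 2) (x - t)) ∂μ := by
        simp only [convolution_def, lsmul_apply]
        exact norm_integral_le_of_norm_le ((hint₁.add hint₂).const_mul _)
          (norm_smul_le_rpowMajorant_ae (by linarith) (by linarith) hC₁ hC₂ hf₁ hf₂ x)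
    _ = C₁ * C₂ * c * (‖x‖ / 2) ^ (d + a + b) := by
        rw [integral_const_mul, integral_add hint₁ hint₂,
          integral_sub_left_eq_self (rpowMajorant b a (‖x‖ / 2)) μ x,
          integral_rpowMajorant μ hr, integral_rpowMajorant μ hr, add_right_comm _ b a]
        ring
    _ = C₁ * C₂ * c * 2 ^ (-(d + a + b)) * ‖x‖ ^ (d + a + b) := by
        rw [div_rpow (norm_nonneg x) zero_le_two, div_eq_mul_inv, ← rpow_neg zero_le_two]
        ring

end ConvolutionBound

lemma convolution_eq_add_of_forall_ne_zero {G : Type*} [Sub G] [MeasurableSpace G] {μ : Measure G}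
    {f₁ f₂ u v w : G → ℝ} {x : G}
    (hsum : ∀ t, u t + v t = f₁ t) (hw : ∀ t, u t ≠ 0 → w (x - t) = f₂ (x - t))
    (huw : ConvolutionExistsAt u w x (lsmul ℝ ℝ) μ)
    (hvf : ConvolutionExistsAt v f₂ x (lsmul ℝ ℝ) μ) :
    (f₁ ⋆[lsmul ℝ ℝ, μ] f₂) x = (u ⋆[lsmul ℝ ℝ, μ] w) x + (v ⋆[lsmul ℝ ℝ, μ] f₂) x := by
  rw [convolution_def, convolution_def, convolution_def, ← integral_add huw hvf]
  refine integral_congr_ae (ae_of_all _ fun t => ?_)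
  simp only [lsmul_apply, smul_eq_mul, ← hsum t]
  by_cases ht : u t = 0
  · simp [ht]
  · rw [hw t ht]
    ring

section Continuity

variable {E : Type*} [NormedAddCommGroup E] [NormedSpace ℝ E] [FiniteDimensional ℝ E]
  {f : E → ℝ}

lemma ContDiffBump.continuous_one_sub_mul (χ : ContDiffBump (0 : E))
    (hf : ContinuousOn f {0}ᶜ) : Continuous fun x => (1 - χ x) * f x := by
  refine continuous_iff_continuousAt.2 fun x => ?_
  rcases eq_or_ne x 0 with rfl | hx
  · have h : (fun x => (1 - χ x) * f x) =ᶠ[𝓝 0] fun _ => 0 :=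
      χ.eventuallyEq_one.mono fun y hy => by simp [hy]
    exact continuousAt_const.congr h.symm
  · exact (continuous_const.sub χ.continuous).continuousAt.mul
      (hf.continuousAt (isOpen_compl_singleton.mem_nhds hx))

lemma ContDiffBump.norm_one_sub_mul_le (χ : ContDiffBump (0 : E)) {C : ℝ}
    (hf : ∀ z, χ.rIn ≤ ‖z‖ → ‖f z‖ ≤ C) (x : E) : ‖(1 - χ x) * f x‖ ≤ max C 0 := by
  rcases lt_or_ge ‖x‖ χ.rIn with hx | hx
  · rw [χ.one_of_mem_closedBall (mem_closedBall_zero_iff.2 hx.le)]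
    simp
  · rw [norm_mul]
    refine le_max_of_le_left ((mul_le_of_le_one_left (norm_nonneg _) ?_).trans (hf x hx))
    rw [norm_of_nonneg (sub_nonneg.2 χ.le_one)]
    linarith [χ.nonneg (x := x)]

lemma ContDiffBump.apply_sub_eq_zero (χ : ContDiffBump (0 : E)) {x t : E}
    (hx : 2 * χ.rOut ≤ ‖x‖) (ht : χ t ≠ 0) : χ (x - t) = 0 := by
  have ht' : ‖t‖ < χ.rOut := mem_ball_zero_iff.1 (χ.support_eq.subset ht)
  refine χ.zero_of_le_dist ?_
  rw [dist_zero_right]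
  linarith [norm_sub_norm_le x t]

variable [MeasurableSpace E] [BorelSpace E] {μ : Measure E} [μ.IsAddHaarMeasure]
  {f₁ f₂ : E → ℝ}

theorem continuousAt_convolution_of_ne_zero (hi₁ : Integrable f₁ μ) (hi₂ : Integrable f₂ μ)
    (hc₁ : ContinuousOn f₁ {0}ᶜ) (hc₂ : ContinuousOn f₂ {0}ᶜ)
    (hb₁ : ∀ r > 0, ∃ C, ∀ z, r ≤ ‖z‖ → ‖f₁ z‖ ≤ C)
    (hb₂ : ∀ r > 0, ∃ C, ∀ z, r ≤ ‖z‖ → ‖f₂ z‖ ≤ C) {x₀ : E} (hx₀ : x₀ ≠ 0) :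
    ContinuousAt (f₁ ⋆[lsmul ℝ ℝ, μ] f₂) x₀ := by
  have hR : 0 < ‖x₀‖ := norm_pos_iff.2 hx₀
  let χ : ContDiffBump (0 : E) := ⟨‖x₀‖ / 8, ‖x₀‖ / 4, by positivity, by linarith⟩
  obtain ⟨C₁, hC₁⟩ := hb₁ χ.rIn χ.rIn_pos
  obtain ⟨C₂, hC₂⟩ := hb₂ χ.rIn χ.rIn_pos
  let u := fun t => χ t * f₁ t
  let v := fun t => (1 - χ t) * f₁ t
  let w := fun t => (1 - χ t) * f₂ t
  have hu : Integrable u μ := hi₁.bdd_mul χ.continuous.aestronglyMeasurable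
    (c := 1) (ae_of_all _ fun t => by rw [norm_of_nonneg χ.nonneg]; exact χ.le_one)
  have hv := χ.continuous_one_sub_mul hc₁
  have hw := χ.continuous_one_sub_mul hc₂
  have hvle := χ.norm_one_sub_mul_le hC₁
  have hwle := χ.norm_one_sub_mul_le hC₂
  have hsplit : ∀ x ∈ ball x₀ (‖x₀‖ / 2),
      (f₁ ⋆[lsmul ℝ ℝ, μ] f₂) x = (u ⋆[lsmul ℝ ℝ, μ] w) x + (v ⋆[lsmul ℝ ℝ, μ] f₂) x := by
    intro x hx
    have hfar : 2 * χ.rOut ≤ ‖x‖ := by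
      change 2 * (‖x₀‖ / 4) ≤ ‖x‖
      linarith [norm_sub_norm_le x₀ x, mem_ball_iff_norm'.1 hx]
    refine convolution_eq_add_of_forall_ne_zero (fun t => by ring) (fun t ht => ?_)
      (hu.mul_bdd (hw.comp (continuous_const.sub continuous_id)).aestronglyMeasurable
        (ae_of_all _ fun t => hwle (x - t)))
      ((hi₂.comp_sub_left x).bdd_mul hv.aestronglyMeasurable (ae_of_all _ hvle))
    simp only [w, χ.apply_sub_eq_zero hfar (left_ne_zero_of_mul ht), sub_zero, one_mul]
  exact ((BddAbove.continuous_convolution_right_of_integrable _ ⟨_, forall_mem_range.2 hwle⟩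
    hu hw).add (BddAbove.continuous_convolution_left_of_integrable _
      ⟨_, forall_mem_range.2 hvle⟩ hv hi₂)).continuousAt.congr
    (eventuallyEq_of_mem (ball_mem_nhds x₀ (by positivity)) hsplit).symm

end Continuity

section PowerProfile

variable {E : Type*} [NormedAddCommGroup E] {K f : E → ℝ} {a s C : ℝ}

lemma norm_le_rpow_of_eq_div_rpow (hK₀ : ∀ x, 0 ≤ K x) (hKC : ∀ x, K x ≤ C)
    (hf : ∀ x ≠ 0, f x = K x / ‖x‖ ^ s) : ∀ x ≠ 0, ‖f x‖ ≤ C * ‖x‖ ^ (-s) := by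
  intro x hx
  have hpow : 0 ≤ ‖x‖ ^ s := rpow_nonneg (norm_nonneg x) s
  rw [hf x hx, norm_of_nonneg (div_nonneg (hK₀ x) hpow), rpow_neg (norm_nonneg x), ← div_eq_mul_inv]
  exact div_le_div_of_nonneg_right (hKC x) hpow

lemma continuousOn_of_eq_div_rpow (hK : ContinuousOn K {0}ᶜ)
    (hf : ∀ x ≠ 0, f x = K x / ‖x‖ ^ s) : ContinuousOn f {0}ᶜ :=
  (hK.div (continuous_norm.continuousOn.rpow_const fun _ hx => Or.inl (norm_ne_zero_iff.2 hx))
    fun _ hx => (rpow_pos_of_pos (norm_pos_iff.2 hx) s).ne').congr fun x hx => hf x hx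

lemma exists_norm_le_of_norm_le_rpow (ha : a ≤ 0) (hC : 0 ≤ C)
    (hf : ∀ z ≠ 0, ‖f z‖ ≤ C * ‖z‖ ^ a) : ∀ r > 0, ∃ C', ∀ z, r ≤ ‖z‖ → ‖f z‖ ≤ C' :=
  fun r hr => ⟨C * r ^ a, fun z hz => (hf z (norm_pos_iff.1 (hr.trans_le hz))).trans
    (mul_le_mul_of_nonneg_left (rpow_le_rpow_of_nonpos hr hz ha) hC)⟩

lemma exists_bounded_eq_mul_rpow_norm {g : E → ℝ} {p M : ℝ} (hg : ContinuousOn g {0}ᶜ)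
    (hle : ∀ x ≠ 0, ‖g x‖ ≤ M * ‖x‖ ^ p) :
    ∃ B : E → ℝ, (∃ C, ∀ x, |B x| ≤ C) ∧ ContinuousOn B {0}ᶜ ∧
      ∀ x ≠ 0, g x = B x * ‖x‖ ^ p := by
  refine ⟨fun x => g x * ‖x‖ ^ (-p), ⟨max M |g 0|, fun x => ?_⟩,
    hg.mul (continuous_norm.continuousOn.rpow_const fun _ hx => Or.inl (norm_ne_zero_iff.2 hx)),
    fun x hx => ?_⟩
  · rcases eq_or_ne x 0 with rfl | hx
    · rw [abs_mul, norm_zero, abs_of_nonneg (zero_rpow_nonneg _)]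
      exact le_max_of_le_right (mul_le_of_le_one_right (abs_nonneg _) (zero_rpow_le_one _))
    · have hx' := norm_pos_iff.2 hx
      rw [abs_mul, abs_of_pos (rpow_pos_of_pos hx' _), ← Real.norm_eq_abs]
      refine le_max_of_le_left
        ((mul_le_mul_of_nonneg_right (hle x hx) (rpow_nonneg hx'.le _)).trans_eq ?_)
      rw [mul_assoc, ← rpow_add hx', add_neg_cancel, rpow_zero, mul_one]
  · rw [mul_assoc, ← rpow_add (norm_pos_iff.2 hx), neg_add_cancel, rpow_zero, mul_one]

end PowerProfile

theorem convolution_singularity_subcritical_general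
    (n : ℕ)
    (f₁ f₂ K₁ K₂ : EuclideanSpace ℝ (Fin n) → ℝ) (κ₁ κ₂ : ℝ)
    (hκ₁ : 0 < κ₁) (hκ₂ : 0 < κ₂) (hsub : κ₁ + κ₂ < n)
    (hK₁0 : ∀ lam, 0 ≤ K₁ lam) (hK₂0 : ∀ lam, 0 ≤ K₂ lam)
    (hK₁b : ∃ C, ∀ lam, K₁ lam ≤ C) (hK₂b : ∃ C, ∀ lam, K₂ lam ≤ C)
    (hK₁c : ContinuousOn K₁ {(0 : EuclideanSpace ℝ (Fin n))}ᶜ)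
    (hK₂c : ContinuousOn K₂ {(0 : EuclideanSpace ℝ (Fin n))}ᶜ)
    (hf₁ : ∀ lam, lam ≠ 0 → f₁ lam = K₁ lam / ‖lam‖ ^ ((n : ℝ) - κ₁))
    (hf₂ : ∀ lam, lam ≠ 0 → f₂ lam = K₂ lam / ‖lam‖ ^ ((n : ℝ) - κ₂))
    (hf₁i : Integrable f₁) (hf₂i : Integrable f₂) :
    ∃ B : EuclideanSpace ℝ (Fin n) → ℝ,
      (∃ C, ∀ lam, |B lam| ≤ C) ∧
      ContinuousOn B {(0 : EuclideanSpace ℝ (Fin n))}ᶜ ∧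
      ∀ lam, lam ≠ 0 →
        (∫ η, f₁ (lam - η) * f₂ η) = B lam * ‖lam‖ ^ (κ₁ + κ₂ - n) := by
  obtain ⟨C₁, hC₁⟩ := hK₁b
  obtain ⟨C₂, hC₂⟩ := hK₂b
  have hC₁0 : 0 ≤ C₁ := (hK₁0 0).trans (hC₁ 0)
  have hC₂0 : 0 ≤ C₂ := (hK₂0 0).trans (hC₂ 0)
  have hle₁ := norm_le_rpow_of_eq_div_rpow hK₁0 hC₁ hf₁
  have hle₂ := norm_le_rpow_of_eq_div_rpow hK₂0 hC₂ hf₂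
  have hd : (finrank ℝ (EuclideanSpace ℝ (Fin n)) : ℝ) = n := by simp
  obtain ⟨M, hM⟩ := norm_convolution_le_rpow (μ := volume) (by rw [hd]; linarith)
    (by rw [hd]; linarith) (by rw [hd]; linarith) hC₁0 hC₂0 hle₁ hle₂
  have hcont : ContinuousOn (f₁ ⋆[lsmul ℝ ℝ, volume] f₂) {0}ᶜ := fun x hx =>
    (continuousAt_convolution_of_ne_zero hf₁i hf₂i (continuousOn_of_eq_div_rpow hK₁c hf₁)
      (continuousOn_of_eq_div_rpow hK₂c hf₂)
      (exists_norm_le_of_norm_le_rpow (by linarith) hC₁0 hle₁)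
      (exists_norm_le_of_norm_le_rpow (by linarith) hC₂0 hle₂) hx).continuousWithinAt
  obtain ⟨B, hB, hBc, hBeq⟩ := exists_bounded_eq_mul_rpow_norm hcont hM
  refine ⟨B, hB, hBc, fun x hx => ?_⟩
  simp only [← smul_eq_mul, ← convolution_lsmul_swap, hBeq x hx, hd]
  congr 2
  ring

theorem convolution_singularity_subcritical
    (n : ℕ) (hn : 1 ≤ n)
    (f₁ f₂ K₁ K₂ : EuclideanSpace ℝ (Fin n) → ℝ) (κ₁ κ₂ : ℝ)
    (hκ₁ : 0 < κ₁) (hκ₂ : 0 < κ₂) (hsub : κ₁ + κ₂ < n)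
    (hK₁0 : ∀ lam, 0 ≤ K₁ lam) (hK₂0 : ∀ lam, 0 ≤ K₂ lam)
    (hK₁b : ∃ C, ∀ lam, K₁ lam ≤ C) (hK₂b : ∃ C, ∀ lam, K₂ lam ≤ C)
    (hK₁c : ContinuousOn K₁ {(0 : EuclideanSpace ℝ (Fin n))}ᶜ)
    (hK₂c : ContinuousOn K₂ {(0 : EuclideanSpace ℝ (Fin n))}ᶜ)
    (hf₁ : ∀ lam, lam ≠ 0 → f₁ lam = K₁ lam / ‖lam‖ ^ ((n : ℝ) - κ₁))
    (hf₂ : ∀ lam, lam ≠ 0 → f₂ lam = K₂ lam / ‖lam‖ ^ ((n : ℝ) - κ₂))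
    (hf₁0 : ∀ lam, 0 ≤ f₁ lam) (hf₂0 : ∀ lam, 0 ≤ f₂ lam)
    (hf₁i : Integrable f₁) (hf₂i : Integrable f₂) :
    ∃ B : EuclideanSpace ℝ (Fin n) → ℝ,
      (∃ C, ∀ lam, |B lam| ≤ C) ∧
      ContinuousOn B {(0 : EuclideanSpace ℝ (Fin n))}ᶜ ∧
      ∀ lam, lam ≠ 0 →
        (∫ η, f₁ (lam - η) * f₂ η) = B lam * ‖lam‖ ^ (κ₁ + κ₂ - n) :=
  convolution_singularity_subcritical_general n f₁ f₂ K₁ K₂ κ₁ κ₂ hκ₁ hκ₂ hsub hK₁0 hK₂0 hK₁b hK₂b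
    hK₁c hK₂c hf₁ hf₂ hf₁i hf₂i
end

section
/- Suppose f₁, f₂ : ℝⁿ → [0,∞) satisfy fⱼ(λ) = Kⱼ(λ)/|λ|^{n−κⱼ} with κⱼ > 0 and κ₁ + κ₂ = n, where K₁, K₂ are nonnegative bounded continuous functions on ℝⁿ \ {0} and f₁, f₂ ∈ L¹(ℝⁿ). Then there is a constant C such that the convolution g(λ) = ∫ f₁(λ−η) f₂(η) dη satisfies g(λ) ≤ C · ln(2 + 1/|λ|) for all λ ≠ 0. -/
/-!
Bound `fᵢ x ≤ M ‖x‖ ^ (κᵢ - n)` and put `r = ‖λ‖`. On the ball `‖η‖ < 2r + 1` the integrand is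
then at most `M²` times a product of two Riesz kernels, which is split over the regions
`‖η‖ < r/2`, `‖λ - η‖ < r/2`, `‖η‖ ≤ 2r` and `2r < ‖η‖ < 2r + 1`. Since `κ₁ + κ₂ = n`, the first
three contribute amounts independent of `r` by homogeneity; on the last the product is comparable
to `‖η‖ ^ (-n)`, whose integral over the annulus is a multiple of `log ((2r + 1) / 2r)`: this is
where the logarithm comes from. Outside the ball `‖λ - η‖ ≥ 1`, so `f₁ (λ - η) ≤ M` and the
integrability of `f₂` controls the rest.
-/

open Real MeasureTheory Metric Set Module

theorem indicator_norm_preimage {E : Type*} [SeminormedAddGroup E] (f : ℝ → ℝ) (s : Set ℝ) :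
    ((‖·‖) ⁻¹' s).indicator (fun x : E ↦ f ‖x‖) = fun x ↦ s.indicator f ‖x‖ :=
  funext fun _ ↦ indicator_comp_right _

theorem ball_zero_eq_preimage_norm {E : Type*} [SeminormedAddGroup E] (ρ : ℝ) :
    ball (0 : E) ρ = (‖·‖) ⁻¹' Iio ρ := by
  ext; simp

theorem pow_pred_mul_rpow_sub {n : ℕ} (hn : n ≠ 0) {y : ℝ} (hy : 0 < y) (κ : ℝ) :
    y ^ (n - 1) * y ^ (κ - n) = y ^ (κ - 1) := by
  rw [← rpow_natCast, ← rpow_add hy, Nat.cast_sub (Nat.one_le_iff_ne_zero.2 hn)]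
  ring_nf

theorem setIntegral_Ioo_pow_pred_mul_rpow_sub {n : ℕ} (hn : n ≠ 0) {κ ρ : ℝ} (hκ : 0 < κ)
    (hρ : 0 ≤ ρ) : ∫ y in Ioo 0 ρ, y ^ (n - 1) * y ^ (κ - n) = ρ ^ κ / κ := by
  rw [setIntegral_congr_fun measurableSet_Ioo fun y hy ↦ pow_pred_mul_rpow_sub hn hy.1 κ,
    ← integral_Ioc_eq_integral_Ioo, ← intervalIntegral.integral_of_le hρ,
    integral_rpow (.inl (by linarith)), sub_add_cancel, zero_rpow hκ.ne', sub_zero]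

variable {E : Type*} [NormedAddCommGroup E] [NormedSpace ℝ E]

noncomputable def rieszKernel (κ : ℝ) (x : E) : ℝ :=
  ‖x‖ ^ (κ - finrank ℝ E)

section Pointwise

variable {κ₁ κ₂ : ℝ}

theorem rieszKernel_nonneg (κ : ℝ) (x : E) : 0 ≤ rieszKernel κ x :=
  rpow_nonneg (norm_nonneg x) _

@[simp]
theorem rieszKernel_neg (κ : ℝ) (x : E) : rieszKernel κ (-x) = rieszKernel κ x := by
  rw [rieszKernel, rieszKernel, norm_neg]

theorem rieszKernel_le_rpow {κ a : ℝ} (hκ : κ ≤ finrank ℝ E) (ha : 0 < a) {x : E}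
    (hx : a ≤ ‖x‖) : rieszKernel κ x ≤ a ^ (κ - finrank ℝ E) :=
  rpow_le_rpow_of_nonpos ha hx (by linarith)

theorem rieszKernel_sub_mul_le_of_norm_lt (hκ₂ : 0 ≤ κ₂) (hκ : κ₁ + κ₂ = finrank ℝ E)
    {lam η : E} (h : ‖η‖ < ‖lam‖ / 2) :
    rieszKernel κ₁ (lam - η) * rieszKernel κ₂ η ≤ (‖lam‖ / 2) ^ (-κ₂) * rieszKernel κ₂ η := by
  have hfar : ‖lam‖ / 2 ≤ ‖lam - η‖ := by have := norm_sub_norm_le lam η; linarith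
  refine mul_le_mul_of_nonneg_right ?_ (rieszKernel_nonneg κ₂ η)
  rw [show -κ₂ = κ₁ - finrank ℝ E by linarith]
  exact rieszKernel_le_rpow (by linarith) ((norm_nonneg η).trans_lt h) hfar

theorem rieszKernel_sub_mul_le_of_norm_sub_lt (hκ₁ : 0 ≤ κ₁) (hκ : κ₁ + κ₂ = finrank ℝ E)
    {lam η : E} (h : ‖η - lam‖ < ‖lam‖ / 2) :
    rieszKernel κ₁ (lam - η) * rieszKernel κ₂ η ≤
      (‖lam‖ / 2) ^ (-κ₁) * rieszKernel κ₁ (η - lam) := by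
  have := rieszKernel_sub_mul_le_of_norm_lt (κ₁ := κ₂) (lam := lam) (η := lam - η) hκ₁
    (by linarith)
    (by rwa [norm_sub_rev])
  rw [← neg_sub lam η, rieszKernel_neg]
  rwa [sub_sub_cancel, mul_comm] at this

theorem rieszKernel_sub_mul_le_of_le_norm (hκ₁ : κ₁ ≤ finrank ℝ E) (hκ₂ : κ₂ ≤ finrank ℝ E)
    (hκ : κ₁ + κ₂ = finrank ℝ E) {ρ : ℝ} (hρ : 0 < ρ) {lam η : E} (h₁ : ρ ≤ ‖lam - η‖)
    (h₂ : ρ ≤ ‖η‖) : rieszKernel κ₁ (lam - η) * rieszKernel κ₂ η ≤ (ρ ^ finrank ℝ E)⁻¹ := by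
  calc rieszKernel κ₁ (lam - η) * rieszKernel κ₂ η
      ≤ ρ ^ (κ₁ - finrank ℝ E) * ρ ^ (κ₂ - finrank ℝ E) :=
        mul_le_mul (rieszKernel_le_rpow hκ₁ hρ h₁) (rieszKernel_le_rpow hκ₂ hρ h₂)
          (rieszKernel_nonneg κ₂ η) (by positivity)
    _ = (ρ ^ finrank ℝ E)⁻¹ := by
        rw [← rpow_add hρ, show κ₁ - finrank ℝ E + (κ₂ - finrank ℝ E) = -(finrank ℝ E : ℕ) by
          linarith, rpow_neg hρ.le, rpow_natCast]

variable [FiniteDimensional ℝ E] [Nontrivial E]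

theorem rieszKernel_mul_rieszKernel (hκ : κ₁ + κ₂ = finrank ℝ E) (x : E) :
    rieszKernel κ₁ x * rieszKernel κ₂ x = rieszKernel 0 x := by
  have hd : (0 : ℝ) < finrank ℝ E := Nat.cast_pos.2 finrank_pos
  rw [rieszKernel, rieszKernel, rieszKernel, ← rpow_add' (norm_nonneg x) (by linarith)]
  congr 1
  linarith

theorem rieszKernel_sub_mul_le_of_two_mul_norm_le (hκ₁ : κ₁ ≤ finrank ℝ E)
    (hκ : κ₁ + κ₂ = finrank ℝ E) {lam η : E} (hη : η ≠ 0) (h : 2 * ‖lam‖ ≤ ‖η‖) :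
    rieszKernel κ₁ (lam - η) * rieszKernel κ₂ η ≤ 2 ^ (finrank ℝ E - κ₁) * rieszKernel 0 η := by
  have hη₀ : 0 < ‖η‖ := norm_pos_iff.2 hη
  have hfar : ‖η‖ / 2 ≤ ‖lam - η‖ := by
    have := norm_sub_norm_le η lam
    rw [norm_sub_rev] at this
    linarith
  have hhalf : (‖η‖ / 2) ^ (κ₁ - finrank ℝ E) = 2 ^ (finrank ℝ E - κ₁) * rieszKernel κ₁ η := by
    rw [div_rpow hη₀.le zero_le_two, div_eq_mul_inv, ← rpow_neg zero_le_two, neg_sub, mul_comm,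
      rieszKernel]
  calc rieszKernel κ₁ (lam - η) * rieszKernel κ₂ η
      ≤ (‖η‖ / 2) ^ (κ₁ - finrank ℝ E) * rieszKernel κ₂ η := by
        gcongr
        · exact rieszKernel_nonneg κ₂ η
        · exact rieszKernel_le_rpow hκ₁ (by positivity) hfar
    _ = 2 ^ (finrank ℝ E - κ₁) * rieszKernel 0 η := by
        rw [hhalf, mul_assoc, rieszKernel_mul_rieszKernel hκ]

-- The second piece is a function of `η - lam` (not `lam - η`) so that its integral can be
-- computed by translation invariance alone.
theorem rieszKernel_sub_mul_le (hκ₁ : 0 < κ₁) (hκ₂ : 0 < κ₂) (hκ : κ₁ + κ₂ = finrank ℝ E)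
    {lam : E} (hlam : lam ≠ 0) {R : ℝ} {η : E} (hη : ‖η‖ < R) :
    rieszKernel κ₁ (lam - η) * rieszKernel κ₂ η ≤
      (ball 0 (‖lam‖ / 2)).indicator (fun u ↦ (‖lam‖ / 2) ^ (-κ₂) * rieszKernel κ₂ u) η +
      (ball 0 (‖lam‖ / 2)).indicator (fun u ↦ (‖lam‖ / 2) ^ (-κ₁) * rieszKernel κ₁ u) (η - lam) +
      (closedBall 0 (2 * ‖lam‖)).indicator (fun _ ↦ ((‖lam‖ / 2) ^ finrank ℝ E)⁻¹) η +
      ((‖·‖) ⁻¹' Ioo (2 * ‖lam‖) R).indicator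
        (fun u ↦ 2 ^ (finrank ℝ E - κ₁) * rieszKernel 0 u) η := by
  set ρ := ‖lam‖ / 2
  have hρ : 0 < ρ := by positivity
  set g₁ := (ball (0 : E) ρ).indicator fun u ↦ ρ ^ (-κ₂) * rieszKernel κ₂ u
  set g₂ := (ball (0 : E) ρ).indicator fun u ↦ ρ ^ (-κ₁) * rieszKernel κ₁ u
  set g₃ := (closedBall (0 : E) (2 * ‖lam‖)).indicator fun _ ↦ (ρ ^ finrank ℝ E)⁻¹
  set g₄ := ((‖·‖) ⁻¹' Ioo (2 * ‖lam‖) R).indicator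
    fun u : E ↦ 2 ^ (finrank ℝ E - κ₁) * rieszKernel 0 u
  have h₁0 : 0 ≤ g₁ η := indicator_nonneg (fun u _ ↦
    mul_nonneg (by positivity) (rieszKernel_nonneg κ₂ u)) η
  have h₂0 : 0 ≤ g₂ (η - lam) := indicator_nonneg (fun u _ ↦
    mul_nonneg (by positivity) (rieszKernel_nonneg κ₁ u)) _
  have h₃0 : 0 ≤ g₃ η := indicator_nonneg (fun _ _ ↦ by positivity) η
  have h₄0 : 0 ≤ g₄ η := indicator_nonneg (fun u _ ↦
    mul_nonneg (by positivity) (rieszKernel_nonneg 0 u)) η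
  by_cases h₁ : ‖η‖ < ρ
  · have := rieszKernel_sub_mul_le_of_norm_lt hκ₂.le hκ h₁
    rw [← indicator_of_mem (mem_ball_zero_iff.2 h₁) (fun u ↦ ρ ^ (-κ₂) * rieszKernel κ₂ u)] at this
    linarith
  by_cases h₂ : ‖η - lam‖ < ρ
  · have := rieszKernel_sub_mul_le_of_norm_sub_lt hκ₁.le hκ h₂
    rw [← indicator_of_mem (mem_ball_zero_iff.2 h₂) (fun u ↦ ρ ^ (-κ₁) * rieszKernel κ₁ u)] at this
    linarith
  by_cases h₃ : ‖η‖ ≤ 2 * ‖lam‖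
  · have := rieszKernel_sub_mul_le_of_le_norm (by linarith) (by linarith) hκ hρ
      (by rw [norm_sub_rev]; exact not_lt.1 h₂) (not_lt.1 h₁)
    rw [← indicator_of_mem (mem_closedBall_zero_iff.2 h₃) (fun _ ↦ (ρ ^ finrank ℝ E)⁻¹)] at this
    linarith
  · have hη₀ : η ≠ 0 := by rintro rfl; simp at h₃
    have := rieszKernel_sub_mul_le_of_two_mul_norm_le (by linarith) hκ hη₀ (not_le.1 h₃).le
    rw [← indicator_of_mem (show η ∈ (‖·‖) ⁻¹' Ioo (2 * ‖lam‖) R from ⟨not_le.1 h₃, hη⟩)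
      (fun u ↦ 2 ^ (finrank ℝ E - κ₁) * rieszKernel 0 u)] at this
    linarith

end Pointwise

section Integrals

variable [FiniteDimensional ℝ E] [Nontrivial E] [MeasurableSpace E] [BorelSpace E]
  (μ : Measure E) [μ.IsAddHaarMeasure]

theorem integrableOn_fun_norm_preimage_iff {f : ℝ → ℝ} {s : Set ℝ} (hs : MeasurableSet s) :
    IntegrableOn (fun x : E ↦ f ‖x‖) ((‖·‖) ⁻¹' s) μ ↔
      IntegrableOn (fun y ↦ y ^ (finrank ℝ E - 1) * f y) (Ioi 0 ∩ s) := by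
  rw [← integrable_indicator_iff (hs.preimage measurable_norm), indicator_norm_preimage,
    integrable_fun_norm_addHaar μ, inter_comm, ← integrableOn_indicator_iff hs]
  congr! 1; ext y
  exact (indicator_mul_right s _ f).symm

theorem setIntegral_fun_norm_preimage (f : ℝ → ℝ) {s : Set ℝ} (hs : MeasurableSet s) :
    ∫ x in (‖·‖) ⁻¹' s, f ‖x‖ ∂μ =
      finrank ℝ E * μ.real (ball 0 1) * ∫ y in Ioi 0 ∩ s, y ^ (finrank ℝ E - 1) * f y := by
  rw [← integral_indicator (hs.preimage measurable_norm), indicator_norm_preimage,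
    integral_fun_norm_addHaar μ, ← setIntegral_indicator hs]
  simp only [smul_eq_mul, indicator_mul_right, nsmul_eq_mul, mul_assoc]

theorem integrableOn_rieszKernel_ball {κ : ℝ} (hκ : 0 < κ) (ρ : ℝ) :
    IntegrableOn (rieszKernel κ) (ball 0 ρ) μ := by
  rw [ball_zero_eq_preimage_norm]
  refine (integrableOn_fun_norm_preimage_iff μ (f := (· ^ (κ - finrank ℝ E)))
    measurableSet_Iio).2 ?_
  rw [Ioi_inter_Iio, integrableOn_congr_fun
    (fun y hy ↦ pow_pred_mul_rpow_sub finrank_pos.ne' hy.1 κ) measurableSet_Ioo]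
  exact (intervalIntegral.intervalIntegrable_rpow' (by linarith)).def'.mono_set
    (Ioo_subset_Ioc_self.trans Ioc_subset_uIoc)

theorem setIntegral_rieszKernel_ball {κ ρ : ℝ} (hκ : 0 < κ) (hρ : 0 ≤ ρ) :
    ∫ x in ball 0 ρ, rieszKernel κ x ∂μ = finrank ℝ E * μ.real (ball 0 1) * (ρ ^ κ / κ) := by
  rw [ball_zero_eq_preimage_norm]
  refine (setIntegral_fun_norm_preimage μ (· ^ (κ - finrank ℝ E)) measurableSet_Iio).trans ?_
  rw [Ioi_inter_Iio, setIntegral_Ioo_pow_pred_mul_rpow_sub finrank_pos.ne' hκ hρ]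

theorem integral_indicator_ball_rpow_neg_mul_rieszKernel {κ ρ : ℝ} (hκ : 0 < κ) (hρ : 0 < ρ) :
    ∫ x, (ball 0 ρ).indicator (fun u ↦ ρ ^ (-κ) * rieszKernel κ u) x ∂μ =
      finrank ℝ E * μ.real (ball 0 1) / κ := by
  rw [integral_indicator measurableSet_ball, integral_const_mul,
    setIntegral_rieszKernel_ball μ hκ hρ.le, rpow_neg hρ.le]
  field_simp

theorem integrableOn_rieszKernel_zero_annulus {a : ℝ} (ha : 0 < a) (b : ℝ) :
    IntegrableOn (rieszKernel 0) ((‖·‖) ⁻¹' Ioo a b) μ := by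
  refine (integrableOn_fun_norm_preimage_iff μ (f := (· ^ (0 - finrank ℝ E : ℝ)))
    measurableSet_Ioo).2 ?_
  rw [inter_eq_right.2 (Ioo_subset_Ioi_self.trans (Ioi_subset_Ioi ha.le)),
    integrableOn_congr_fun (fun y hy ↦ by
      rw [pow_pred_mul_rpow_sub finrank_pos.ne' (ha.trans hy.1), zero_sub, rpow_neg_one])
      measurableSet_Ioo]
  exact (continuousOn_inv₀.mono fun y hy ↦ (ha.trans_le hy.1).ne').integrableOn_Icc.mono_set
    Ioo_subset_Icc_self

theorem setIntegral_rieszKernel_zero_annulus {a b : ℝ} (ha : 0 < a) (hab : a ≤ b) :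
    ∫ x in (‖·‖) ⁻¹' Ioo a b, rieszKernel 0 x ∂μ =
      finrank ℝ E * μ.real (ball 0 1) * log (b / a) := by
  refine (setIntegral_fun_norm_preimage μ (· ^ (0 - finrank ℝ E : ℝ)) measurableSet_Ioo).trans ?_
  rw [inter_eq_right.2 (Ioo_subset_Ioi_self.trans (Ioi_subset_Ioi ha.le)),
    setIntegral_congr_fun measurableSet_Ioo fun y hy ↦ by
      rw [pow_pred_mul_rpow_sub finrank_pos.ne' (ha.trans hy.1), zero_sub, rpow_neg_one],
    ← integral_Ioc_eq_integral_Ioo, ← intervalIntegral.integral_of_le hab,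
    integral_inv (by simp [uIcc_of_le hab, ha.not_ge])]

variable {κ₁ κ₂ : ℝ}

theorem exists_integrable_majorant_rieszKernel_sub_mul (hκ₁ : 0 < κ₁) (hκ₂ : 0 < κ₂)
    (hκ : κ₁ + κ₂ = finrank ℝ E) {lam : E} (hlam : lam ≠ 0) {R : ℝ} (hR : 2 * ‖lam‖ ≤ R) :
    ∃ G : E → ℝ, Integrable G μ ∧ 0 ≤ G ∧
      (∀ η ∈ ball 0 R, rieszKernel κ₁ (lam - η) * rieszKernel κ₂ η ≤ G η) ∧
      ∫ η, G η ∂μ = finrank ℝ E * μ.real (ball 0 1) *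
          (1 / κ₁ + 1 / κ₂ + 2 ^ (finrank ℝ E - κ₁) * log (R / (2 * ‖lam‖))) +
        4 ^ finrank ℝ E * μ.real (ball 0 1) := by
  set r := ‖lam‖
  have hr : 0 < r := norm_pos_iff.2 hlam
  set g₁ := (ball (0 : E) (r / 2)).indicator fun u ↦ (r / 2) ^ (-κ₂) * rieszKernel κ₂ u
  set g₂ := (ball (0 : E) (r / 2)).indicator fun u ↦ (r / 2) ^ (-κ₁) * rieszKernel κ₁ u
  set g₃ := (closedBall (0 : E) (2 * r)).indicator fun _ ↦ ((r / 2) ^ finrank ℝ E)⁻¹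
  set g₄ := ((‖·‖) ⁻¹' Ioo (2 * r) R).indicator
    fun u : E ↦ 2 ^ (finrank ℝ E - κ₁) * rieszKernel 0 u
  have hg₁ : Integrable g₁ μ := IntegrableOn.integrable_indicator
    ((integrableOn_rieszKernel_ball μ hκ₂ _).const_mul _) measurableSet_ball
  have hg₂ : Integrable (fun η ↦ g₂ (η - lam)) μ := (IntegrableOn.integrable_indicator
    ((integrableOn_rieszKernel_ball μ hκ₁ _).const_mul _) measurableSet_ball).comp_sub_right lam
  have hg₃ : Integrable g₃ μ :=
    (integrableOn_const measure_closedBall_lt_top.ne).integrable_indicator measurableSet_closedBall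
  have hg₄ : Integrable g₄ μ := IntegrableOn.integrable_indicator
    ((integrableOn_rieszKernel_zero_annulus μ (by positivity) R).const_mul _)
    (measurableSet_Ioo.preimage measurable_norm)
  refine ⟨g₁ + (fun η ↦ g₂ (η - lam)) + g₃ + g₄, ((hg₁.add hg₂).add hg₃).add hg₄, fun η ↦ ?_,
    fun η hη ↦ rieszKernel_sub_mul_le hκ₁ hκ₂ hκ hlam (mem_ball_zero_iff.1 hη), ?_⟩
  · simp only [Pi.add_apply, Pi.zero_apply]
    refine add_nonneg (add_nonneg (add_nonneg ?_ ?_) ?_) ?_ <;>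
      refine indicator_nonneg (fun u _ ↦ ?_) _
    all_goals first
      | positivity
      | exact mul_nonneg (by positivity) (rieszKernel_nonneg _ u)
  · have I₃ : ∫ η, g₃ η ∂μ = 4 ^ finrank ℝ E * μ.real (ball 0 1) := by
      rw [integral_indicator measurableSet_closedBall, setIntegral_const,
        Measure.addHaar_real_closedBall μ 0 (by positivity), smul_eq_mul,
        show 2 * r = 4 * (r / 2) by ring, mul_pow]
      field_simp
    have I₄ : ∫ η, g₄ η ∂μ =
        2 ^ (finrank ℝ E - κ₁) * (finrank ℝ E * μ.real (ball 0 1) * log (R / (2 * r))) := by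
      rw [integral_indicator (measurableSet_Ioo.preimage measurable_norm), integral_const_mul,
        setIntegral_rieszKernel_zero_annulus μ (by positivity) hR]
    rw [integral_add' ((hg₁.add hg₂).add hg₃) hg₄, integral_add' (hg₁.add hg₂) hg₃,
      integral_add' hg₁ hg₂, integral_sub_right_eq_self g₂ lam,
      integral_indicator_ball_rpow_neg_mul_rieszKernel μ hκ₂ (by positivity),
      integral_indicator_ball_rpow_neg_mul_rieszKernel μ hκ₁ (by positivity), I₃, I₄]
    ring

end Integrals

theorem add_mul_log_le_mul_log_two_add_inv {a b r : ℝ} (ha : 0 ≤ a) (hb : 0 ≤ b) (hr : 0 < r) :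
    a + b * log ((2 * r + 1) / (2 * r)) ≤ (a / log 2 + b) * log (2 + 1 / r) := by
  have hlog2 : 0 < log 2 := log_pos one_lt_two
  have hr' : 0 < 1 / r := by positivity
  have h2 : log 2 ≤ log (2 + 1 / r) := log_le_log two_pos (by linarith)
  have hR : log ((2 * r + 1) / (2 * r)) ≤ log (2 + 1 / r) := by
    refine log_le_log (by positivity) ?_
    rw [add_div, div_self (by positivity), show 1 / (2 * r) = 1 / r / 2 by field_simp]
    linarith
  calc a + b * log ((2 * r + 1) / (2 * r))
      ≤ a / log 2 * log (2 + 1 / r) + b * log (2 + 1 / r) := by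
        gcongr
        calc a = a / log 2 * log 2 := by field_simp
          _ ≤ a / log 2 * log (2 + 1 / r) := by gcongr
    _ = (a / log 2 + b) * log (2 + 1 / r) := by ring

section Convolution

variable {κ₁ κ₂ M : ℝ} {f₁ f₂ : E → ℝ}

theorem le_mul_rieszKernel_of_eq_div {f K : E → ℝ} {κ : ℝ} (hK : ∀ x, K x ≤ M)
    (hf : ∀ x, x ≠ 0 → f x = K x / ‖x‖ ^ ((finrank ℝ E : ℝ) - κ)) (x : E) (hx : x ≠ 0) :
    f x ≤ M * rieszKernel κ x := by
  rw [hf x hx, rieszKernel, div_eq_mul_inv, ← rpow_neg (norm_nonneg x), neg_sub]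
  exact mul_le_mul_of_nonneg_right (hK x) (rpow_nonneg (norm_nonneg x) _)

theorem mul_le_indicator_rieszKernel_add (hκ₁ : κ₁ ≤ finrank ℝ E) (hM : 0 ≤ M)
    (hf₁ : ∀ x, x ≠ 0 → f₁ x ≤ M * rieszKernel κ₁ x)
    (hf₂ : ∀ x, x ≠ 0 → f₂ x ≤ M * rieszKernel κ₂ x) (hf₂0 : ∀ x, 0 ≤ f₂ x)
    {lam η : E} (hη : η ≠ 0) (hηlam : η ≠ lam) {R : ℝ} (hR : ‖lam‖ + 1 ≤ R) :
    f₁ (lam - η) * f₂ η ≤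
      M ^ 2 * (ball 0 R).indicator (fun η ↦ rieszKernel κ₁ (lam - η) * rieszKernel κ₂ η) η +
        M * f₂ η := by
  have h₁ := hf₁ (lam - η) (sub_ne_zero.2 hηlam.symm)
  have hf₂M := mul_nonneg hM (hf₂0 η)
  by_cases hηR : η ∈ ball 0 R
  · rw [indicator_of_mem hηR]
    have := mul_le_mul h₁ (hf₂ η hη) (hf₂0 η) (mul_nonneg hM (rieszKernel_nonneg κ₁ _))
    linarith
  · have hfar : 1 ≤ ‖lam - η‖ := by
      have := norm_sub_norm_le η lam
      rw [mem_ball_zero_iff, not_lt] at hηR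
      rw [norm_sub_rev]
      linarith
    have : f₁ (lam - η) ≤ M := by
      simpa using h₁.trans (mul_le_mul_of_nonneg_left
        (rieszKernel_le_rpow hκ₁ one_pos hfar) hM)
    rw [indicator_of_notMem hηR, mul_zero, zero_add]
    exact mul_le_mul_of_nonneg_right this (hf₂0 η)

variable [FiniteDimensional ℝ E] [Nontrivial E] [MeasurableSpace E] [BorelSpace E]
  (μ : Measure E) [μ.IsAddHaarMeasure]

theorem exists_integral_mul_sub_le_mul_log (hκ₁ : 0 < κ₁) (hκ₂ : 0 < κ₂)
    (hκ : κ₁ + κ₂ = finrank ℝ E) (hM : 0 ≤ M)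
    (hf₁ : ∀ x, x ≠ 0 → f₁ x ≤ M * rieszKernel κ₁ x)
    (hf₂ : ∀ x, x ≠ 0 → f₂ x ≤ M * rieszKernel κ₂ x)
    (hf₁0 : ∀ x, 0 ≤ f₁ x) (hf₂0 : ∀ x, 0 ≤ f₂ x) (hf₂i : Integrable f₂ μ) :
    ∃ C, ∀ lam : E, lam ≠ 0 → ∫ η, f₁ (lam - η) * f₂ η ∂μ ≤ C * log (2 + 1 / ‖lam‖) := by
  set c := finrank ℝ E * μ.real (ball (0 : E) 1)
  set A := M ^ 2 * (c * (1 / κ₁ + 1 / κ₂) + 4 ^ finrank ℝ E * μ.real (ball (0 : E) 1)) +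
    M * ∫ η, f₂ η ∂μ
  set B := M ^ 2 * (c * 2 ^ (finrank ℝ E - κ₁))
  have hA : 0 ≤ A := by
    have := integral_nonneg (μ := μ) (f := f₂) hf₂0
    positivity
  refine ⟨A / log 2 + B, fun lam hlam ↦ ?_⟩
  have hr : 0 < ‖lam‖ := norm_pos_iff.2 hlam
  obtain ⟨G, hG, hG0, hkG, hGint⟩ := exists_integrable_majorant_rieszKernel_sub_mul μ hκ₁ hκ₂ hκ
    hlam (R := 2 * ‖lam‖ + 1) (by linarith)
  have hF : ∀ᵐ η ∂μ, f₁ (lam - η) * f₂ η ≤ M ^ 2 * G η + M * f₂ η := by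
    filter_upwards [μ.ae_ne 0, μ.ae_ne lam] with η hη hηlam
    refine (mul_le_indicator_rieszKernel_add (by linarith) hM hf₁ hf₂ hf₂0 hη hηlam
      (R := 2 * ‖lam‖ + 1) (by linarith)).trans ?_
    gcongr
    exact indicator_le' hkG (fun η _ ↦ hG0 η) η
  calc ∫ η, f₁ (lam - η) * f₂ η ∂μ
      ≤ ∫ η, M ^ 2 * G η + M * f₂ η ∂μ := integral_mono_of_nonneg
        (.of_forall fun η ↦ mul_nonneg (hf₁0 _) (hf₂0 η))
        ((hG.const_mul _).add (hf₂i.const_mul _)) hF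
    _ = A + B * log ((2 * ‖lam‖ + 1) / (2 * ‖lam‖)) := by
        rw [integral_add (hG.const_mul _) (hf₂i.const_mul _), integral_const_mul,
          integral_const_mul, hGint]
        ring
    _ ≤ (A / log 2 + B) * log (2 + 1 / ‖lam‖) :=
        add_mul_log_le_mul_log_two_add_inv hA (by positivity) hr

end Convolution

theorem convolution_singularity_critical_general
    (n : ℕ) (hn : 1 ≤ n)
    (f₁ f₂ K₁ K₂ : EuclideanSpace ℝ (Fin n) → ℝ) (κ₁ κ₂ : ℝ)
    (hκ₁ : 0 < κ₁) (hκ₂ : 0 < κ₂) (hcrit : κ₁ + κ₂ = n)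
    (hK₁b : ∃ C, ∀ lam, K₁ lam ≤ C) (hK₂b : ∃ C, ∀ lam, K₂ lam ≤ C)
    (hf₁ : ∀ lam, lam ≠ 0 → f₁ lam = K₁ lam / ‖lam‖ ^ ((n : ℝ) - κ₁))
    (hf₂ : ∀ lam, lam ≠ 0 → f₂ lam = K₂ lam / ‖lam‖ ^ ((n : ℝ) - κ₂))
    (hf₁0 : ∀ lam, 0 ≤ f₁ lam) (hf₂0 : ∀ lam, 0 ≤ f₂ lam)
    (hf₂i : Integrable f₂) :
    ∃ C : ℝ, ∀ lam : EuclideanSpace ℝ (Fin n), lam ≠ 0 →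
      (∫ η, f₁ (lam - η) * f₂ η) ≤ C * Real.log (2 + 1 / ‖lam‖) := by
  have : Nontrivial (EuclideanSpace ℝ (Fin n)) :=
    Module.nontrivial_of_finrank_pos (R := ℝ) (by rw [finrank_euclideanSpace_fin]; omega)
  obtain ⟨M₁, hM₁⟩ := hK₁b
  obtain ⟨M₂, hM₂⟩ := hK₂b
  set M := max (max M₁ M₂) 0
  have hK₁M : ∀ x, K₁ x ≤ M := fun x ↦ (hM₁ x).trans ((le_max_left _ _).trans (le_max_left _ _))
  have hK₂M : ∀ x, K₂ x ≤ M := fun x ↦ (hM₂ x).trans ((le_max_right _ _).trans (le_max_left _ _))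
  simp only [← finrank_euclideanSpace_fin (𝕜 := ℝ) (n := n)] at hcrit hf₁ hf₂
  exact exists_integral_mul_sub_le_mul_log volume hκ₁ hκ₂ hcrit (le_max_right _ _)
    (le_mul_rieszKernel_of_eq_div hK₁M hf₁) (le_mul_rieszKernel_of_eq_div hK₂M hf₂) hf₁0 hf₂0 hf₂i

theorem convolution_singularity_critical
    (n : ℕ) (hn : 1 ≤ n)
    (f₁ f₂ K₁ K₂ : EuclideanSpace ℝ (Fin n) → ℝ) (κ₁ κ₂ : ℝ)
    (hκ₁ : 0 < κ₁) (hκ₂ : 0 < κ₂) (hcrit : κ₁ + κ₂ = n)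
    (hK₁0 : ∀ lam, 0 ≤ K₁ lam) (hK₂0 : ∀ lam, 0 ≤ K₂ lam)
    (hK₁b : ∃ C, ∀ lam, K₁ lam ≤ C) (hK₂b : ∃ C, ∀ lam, K₂ lam ≤ C)
    (hK₁c : ContinuousOn K₁ {(0 : EuclideanSpace ℝ (Fin n))}ᶜ)
    (hK₂c : ContinuousOn K₂ {(0 : EuclideanSpace ℝ (Fin n))}ᶜ)
    (hf₁ : ∀ lam, lam ≠ 0 → f₁ lam = K₁ lam / ‖lam‖ ^ ((n : ℝ) - κ₁))
    (hf₂ : ∀ lam, lam ≠ 0 → f₂ lam = K₂ lam / ‖lam‖ ^ ((n : ℝ) - κ₂))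
    (hf₁0 : ∀ lam, 0 ≤ f₁ lam) (hf₂0 : ∀ lam, 0 ≤ f₂ lam)
    (hf₁i : Integrable f₁) (hf₂i : Integrable f₂) :
    ∃ C : ℝ, ∀ lam : EuclideanSpace ℝ (Fin n), lam ≠ 0 →
      (∫ η, f₁ (lam - η) * f₂ η) ≤ C * Real.log (2 + 1 / ‖lam‖) :=
  convolution_singularity_critical_general n hn f₁ f₂ K₁ K₂ κ₁ κ₂ hκ₁ hκ₂ hcrit hK₁b hK₂b hf₁ hf₂
    hf₁0 hf₂0 hf₂i
end
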